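/- Let G be a finite simple graph whose edge set is partitioned into a perfect matching M and the edge set of a perfect triangle packing T. Then for every t ∈ ℕ, the map P ↦ P ∩ M is a bijection from the set of perfect matchings P of G with |P ∩ M| = t onto the set of subsets S ⊆ M with |S| = t such that every triangle of T has exactly one or exactly three of its vertices covered by the edges of S. -/
import Mathlib


open SimpleGraph

/-- `M` is (the edge set of) a perfect matching of `G`: a set of pairwise disjoint edges
of `G` covering every vertex. -/
def IsPerfectMatchingSet {V : Type*} (G : SimpleGraph V) (M : Set (Sym2 V)) : Prop :=
  M ⊆ G.edgeSet ∧ (∀ e ∈ M, ∀ f ∈ M, e ≠ f → ∀ x, x ∈ e → x ∉ f) ∧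
    ∀ v : V, ∃ e ∈ M, v ∈ e

/-- `t` is the vertex set of a triangle of `G`. -/
def IsTriangle {V : Type*} (G : SimpleGraph V) (t : Set V) : Prop :=
  t.ncard = 3 ∧ ∀ u ∈ t, ∀ v ∈ t, u ≠ v → G.Adj u v

/-- `T` is a perfect triangle packing of `G`: a collection of pairwise vertex-disjoint
triangles covering every vertex. -/
def IsPerfectTrianglePacking {V : Type*} (G : SimpleGraph V) (T : Set (Set V)) : Prop :=
  (∀ t ∈ T, IsTriangle G t) ∧ (∀ t ∈ T, ∀ t' ∈ T, t ≠ t' → Disjoint t t') ∧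
    ∀ v : V, ∃ t ∈ T, v ∈ t

/-- The set of edges spanned by the triangles of `T`. -/
def packingEdges {V : Type*} (T : Set (Set V)) : Set (Sym2 V) :=
  {e | ∃ t ∈ T, ∃ u v, u ∈ t ∧ v ∈ t ∧ u ≠ v ∧ e = s(u, v)}

/-- If the edge set of `G` is partitioned into a perfect matching `M` and the edges of a
perfect triangle packing `T`, then `P ↦ P ∩ M` is a bijection from the perfect matchings
`P` of `G` with `|P ∩ M| = t` onto the `t`-element subsets `S ⊆ M` such that every triangle
of `T` has exactly one or exactly three vertices covered by `S`. -/
private lemma tri_unique {V : Type*} {G : SimpleGraph V} {T : Set (Set V)}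
    (hT : IsPerfectTrianglePacking G T) {t t' : Set V} (ht : t ∈ T) (ht' : t' ∈ T)
    {v : V} (hv : v ∈ t) (hv' : v ∈ t') : t = t' := by
  by_contra h
  exact Set.disjoint_left.mp (hT.2.1 t ht t' ht' h) hv hv'

private lemma match_unique {V : Type*} {G : SimpleGraph V} {P : Set (Sym2 V)}
    (hP : IsPerfectMatchingSet G P) {e f : Sym2 V} (he : e ∈ P) (hf : f ∈ P)
    {v : V} (hv : v ∈ e) (hv' : v ∈ f) : e = f := by
  by_contra h
  exact hP.2.1 e he f hf h v hv hv'

private lemma edge_in_tri {V : Type*} {G : SimpleGraph V} {T : Set (Set V)}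
    (hT : IsPerfectTrianglePacking G T) {e : Sym2 V} {tr : Set V} {v : V}
    (he : e ∈ packingEdges T) (htr : tr ∈ T) (hv : v ∈ e) (hvtr : v ∈ tr) :
    ∃ w ∈ tr, w ≠ v ∧ e = s(v, w) := by
  obtain ⟨tr', htr', u, w, hu, hw, huw, rfl⟩ := he
  rcases Sym2.mem_iff.mp hv with rfl | rfl
  · have htt : tr' = tr := tri_unique hT htr' htr hu hvtr
    exact ⟨w, htt ▸ hw, huw.symm, rfl⟩
  · have htt : tr' = tr := tri_unique hT htr' htr hw hvtr
    exact ⟨u, htt ▸ hu, huw, Sym2.eq_swap⟩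

private lemma third_vertex {V : Type*} [Fintype V] {tr : Set V} (h3 : tr.ncard = 3)
    {v w : V} (hv : v ∈ tr) (hw : w ∈ tr) (hvw : v ≠ w) :
    ∃ z, tr \ {v, w} = {z} := by
  rw [← Set.ncard_eq_one,
    Set.ncard_diff (by simp [Set.insert_subset_iff, hv, hw]) (Set.toFinite _),
    h3, Set.ncard_pair hvw]

private lemma pair_eq {V : Type*} {a b u v : V} (huv : u ≠ v)
    (hu : u ∈ ({a, b} : Set V)) (hv : v ∈ ({a, b} : Set V)) : s(u, v) = s(a, b) := by
  simp only [Set.mem_insert_iff, Set.mem_singleton_iff] at hu hv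
  rcases hu with rfl | rfl <;> rcases hv with rfl | rfl <;>
    first
      | exact absurd rfl huv
      | rfl
      | exact Sym2.eq_swap

theorem perfectMatchings_biject_oddly_covering_subsets
    {V : Type*} [Fintype V] (G : SimpleGraph V)
    (M : Set (Sym2 V)) (T : Set (Set V))
    (hM : IsPerfectMatchingSet G M) (hT : IsPerfectTrianglePacking G T)
    (hdisj : Disjoint M (packingEdges T)) (hunion : M ∪ packingEdges T = G.edgeSet)
    (t : ℕ) :
    Set.BijOn (fun P => P ∩ M)
      {P : Set (Sym2 V) | IsPerfectMatchingSet G P ∧ (P ∩ M).ncard = t}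
      {S : Set (Sym2 V) | S ⊆ M ∧ S.ncard = t ∧
        ∀ tr ∈ T, ({v ∈ tr | ∃ e ∈ S, v ∈ e}.ncard = 1 ∨
                   {v ∈ tr | ∃ e ∈ S, v ∈ e}.ncard = 3)} := by
  refine ⟨?_, ?_, ?_⟩
  · -- MapsTo
    rintro P ⟨hP, hPt⟩
    simp only [Set.mem_setOf_eq]
    refine ⟨Set.inter_subset_right, hPt, ?_⟩
    intro tr htr
    have h3 := (hT.1 tr htr).1
    have hpack : ∀ e ∈ P, e ∉ M → e ∈ packingEdges T := by
      intro e heP heM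
      have h1 : e ∈ M ∪ packingEdges T := hunion ▸ hP.1 heP
      exact h1.resolve_left heM
    have key : ∀ v ∈ tr, (¬ ∃ e ∈ P ∩ M, v ∈ e) →
        ∃ w ∈ tr, w ≠ v ∧ s(v, w) ∈ P ∧ ¬ ∃ e ∈ P ∩ M, w ∈ e := by
      intro v hvtr hvnc
      obtain ⟨e, heP, hve⟩ := hP.2.2 v
      have heM : e ∉ M := fun h => hvnc ⟨e, ⟨heP, h⟩, hve⟩
      obtain ⟨w, hwtr, hwv, rfl⟩ := edge_in_tri hT (hpack e heP heM) htr hve hvtr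
      refine ⟨w, hwtr, hwv, heP, ?_⟩
      rintro ⟨f, ⟨hfP, hfM⟩, hwf⟩
      exact heM ((match_unique hP heP hfP (Sym2.mem_mk_right v w) hwf) ▸ hfM)
    by_cases hall : ∀ v ∈ tr, ∃ e ∈ P ∩ M, v ∈ e
    · right
      have hcs : {v ∈ tr | ∃ e ∈ P ∩ M, v ∈ e} = tr := by
        ext x; exact ⟨fun h => h.1, fun h => ⟨h, hall x h⟩⟩
      rw [hcs]; exact h3
    · push_neg at hall
      obtain ⟨v, hvtr, hvnc0⟩ := hall
      have hvnc : ¬ ∃ e ∈ P ∩ M, v ∈ e := fun ⟨e, he, hv⟩ => hvnc0 e he hv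
      obtain ⟨w, hwtr, hwv, hvwP, hwnc⟩ := key v hvtr hvnc
      obtain ⟨z, hz⟩ := third_vertex h3 hvtr hwtr (Ne.symm hwv)
      have hzmem : z ∈ tr \ {v, w} := by rw [hz]; exact Set.mem_singleton _
      have hztr := hzmem.1
      have hzv : z ≠ v := fun h => hzmem.2 (by simp [h])
      have hzw : z ≠ w := fun h => hzmem.2 (by simp [h])
      have hzc : ∃ e ∈ P ∩ M, z ∈ e := by
        by_contra hznc
        obtain ⟨y, hytr, hyz, hzyP, _⟩ := key z hztr hznc
        have hyvw : y = v ∨ y = w := by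
          by_contra hy
          push_neg at hy
          have hyd : y ∈ tr \ {v, w} := ⟨hytr, by simp [hy.1, hy.2]⟩
          rw [hz, Set.mem_singleton_iff] at hyd
          exact hyz hyd
        have hne : s(z, y) ≠ s(v, w) := by
          intro h
          have hzm : z ∈ s(v, w) := h ▸ Sym2.mem_mk_left z y
          rcases Sym2.mem_iff.mp hzm with h' | h'
          · exact hzv h'
          · exact hzw h'
        rcases hyvw with rfl | rfl
        · exact hP.2.1 _ hzyP _ hvwP hne y (Sym2.mem_mk_right z y) (Sym2.mem_mk_left y w)
        · exact hP.2.1 _ hzyP _ hvwP hne y (Sym2.mem_mk_right z y) (Sym2.mem_mk_right v y)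
      left
      have hcs : {x ∈ tr | ∃ e ∈ P ∩ M, x ∈ e} = {z} := by
        ext x
        constructor
        · rintro ⟨hxtr, hxc⟩
          have hxv : x ≠ v := fun h => hvnc (by rwa [h] at hxc)
          have hxw : x ≠ w := fun h => hwnc (by rwa [h] at hxc)
          have : x ∈ tr \ {v, w} := ⟨hxtr, by simp [hxv, hxw]⟩
          rw [hz] at this; exact this
        · rintro h
          rw [Set.mem_singleton_iff] at h
          subst h
          exact ⟨hztr, hzc⟩
      rw [hcs, Set.ncard_singleton]
  · -- InjOn
    have step : ∀ P Q : Set (Sym2 V), IsPerfectMatchingSet G P → IsPerfectMatchingSet G Q →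
        P ∩ M = Q ∩ M → P ⊆ Q := by
      intro P Q hP hQ hPQ e heP
      by_cases heM : e ∈ M
      · exact (Set.inter_subset_left (s := Q) (t := M)) (hPQ ▸ (⟨heP, heM⟩ : e ∈ P ∩ M))
      · have hepack : e ∈ packingEdges T :=
          (show e ∈ M ∪ packingEdges T from hunion ▸ hP.1 heP).resolve_left heM
        obtain ⟨tr, htr, u, w, hutr, hwtr, huw, rfl⟩ := hepack
        obtain ⟨z, hz⟩ := third_vertex (hT.1 tr htr).1 hutr hwtr huw
        -- Q-edge at a vertex x of s(u,w) is not in M and lies in tr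
        have qedge : ∀ x, x ∈ s(u, w) → x ∈ tr →
            ∃ y ∈ tr, y ≠ x ∧ s(x, y) ∈ Q ∧ (s(x, y) : Sym2 V) ∉ M := by
          intro x hxe hxtr
          obtain ⟨f, hfQ, hxf⟩ := hQ.2.2 x
          have hfM : f ∉ M := by
            intro hfMem
            have hfP : f ∈ P := (Set.inter_subset_left (s := P) (t := M))
              (hPQ ▸ (⟨hfQ, hfMem⟩ : f ∈ Q ∩ M))
            have : s(u, w) = f := match_unique hP heP hfP hxe hxf
            exact heM (this ▸ hfMem)
          have hfpack : f ∈ packingEdges T :=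
            (show f ∈ M ∪ packingEdges T from hunion ▸ hQ.1 hfQ).resolve_left hfM
          obtain ⟨y, hytr, hyx, rfl⟩ := edge_in_tri hT hfpack htr hxf hxtr
          exact ⟨y, hytr, hyx, hfQ, hfM⟩
        obtain ⟨y, hytr, hyu, hfQ, hfM⟩ :=
          qedge u (Sym2.mem_mk_left u w) hutr
        by_cases hyw : y = w
        · subst hyw; exact hfQ
        · -- y must be z
          have hyz : y = z := by
            have : y ∈ tr \ {u, w} := ⟨hytr, by simp [hyu, hyw]⟩
            rw [hz, Set.mem_singleton_iff] at this; exact this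
          rw [hyz] at hfQ hfM
          obtain ⟨y', hy'tr, hy'w, hgQ, hgM⟩ :=
            qedge w (Sym2.mem_mk_right u w) hwtr
          have hzu : z ≠ u := by
            have : z ∈ tr \ {u, w} := by rw [hz]; exact Set.mem_singleton _
            exact fun h => this.2 (by simp [h])
          have hzw : z ≠ w := by
            have : z ∈ tr \ {u, w} := by rw [hz]; exact Set.mem_singleton _
            exact fun h => this.2 (by simp [h])
          by_cases hy'u : y' = u
          · rw [hy'u] at hgQ
            have hne : s(u, z) ≠ s(w, u) := by
              intro h
              have : z ∈ s(w, u) := h ▸ Sym2.mem_mk_right u z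
              rcases Sym2.mem_iff.mp this with h' | h'
              · exact hzw h'
              · exact hzu h'
            exact absurd (match_unique hQ hfQ hgQ (Sym2.mem_mk_left u z)
              (Sym2.mem_mk_right w u)) hne
          · have hy'z : y' = z := by
              have : y' ∈ tr \ {u, w} := ⟨hy'tr, by simp [hy'u, hy'w]⟩
              rw [hz, Set.mem_singleton_iff] at this; exact this
            rw [hy'z] at hgQ hgM
            have hne : s(u, z) ≠ s(w, z) := by
              intro h
              have : u ∈ s(w, z) := h ▸ Sym2.mem_mk_left u z
              rcases Sym2.mem_iff.mp this with h' | h'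
              · exact huw h'
              · exact hzu h'.symm
            exact absurd (match_unique hQ hfQ hgQ (Sym2.mem_mk_right u z)
              (Sym2.mem_mk_right w z)) hne
    rintro P1 ⟨hP1, _⟩ P2 ⟨hP2, _⟩ heq
    simp only at heq
    exact Set.Subset.antisymm (step P1 P2 hP1 hP2 heq) (step P2 P1 hP2 hP1 heq.symm)
  · -- SurjOn
    rintro S ⟨hSM, hSt, hScov⟩
    classical
    set E2 : Set (Sym2 V) := {e | ∃ tr ∈ T, ∃ u v, u ∈ tr ∧ v ∈ tr ∧ u ≠ v ∧
      (¬ ∃ f ∈ S, u ∈ f) ∧ (¬ ∃ f ∈ S, v ∈ f) ∧ e = s(u, v)} with hE2def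
    set P : Set (Sym2 V) := S ∪ E2 with hPdef
    have hE2pack : E2 ⊆ packingEdges T := by
      rintro e ⟨tr, htr, u, v, hu, hv, huv, _, _, rfl⟩
      exact ⟨tr, htr, u, v, hu, hv, huv, rfl⟩
    have hPM : P ∩ M = S := by
      apply Set.Subset.antisymm
      · rintro x ⟨hxP, hxM⟩
        rcases hxP with hxS | hxE
        · exact hxS
        · exact absurd hxM (Set.disjoint_right.mp hdisj (hE2pack hxE))
      · intro x hx; exact ⟨Or.inl hx, hSM hx⟩
    -- key: if some vertex of a triangle is uncovered, the uncovered set is a pair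
    have key2 : ∀ tr ∈ T, ∀ v ∈ tr, (¬ ∃ f ∈ S, v ∈ f) →
        ∃ a b, a ≠ b ∧ tr \ {x ∈ tr | ∃ f ∈ S, x ∈ f} = {a, b} := by
      intro tr htr v hvtr hvnc
      have h3 := (hT.1 tr htr).1
      rcases hScov tr htr with h1 | h3'
      · have h2 : (tr \ {x ∈ tr | ∃ f ∈ S, x ∈ f}).ncard = 2 := by
          rw [Set.ncard_diff (Set.sep_subset _ _) (Set.toFinite _), h3, h1]
        obtain ⟨a, b, hab, hpair⟩ := Set.ncard_eq_two.mp h2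
        exact ⟨a, b, hab, hpair⟩
      · exfalso
        have hcov : {x ∈ tr | ∃ f ∈ S, x ∈ f} = tr :=
          Set.eq_of_subset_of_ncard_le (Set.sep_subset _ _)
            (by rw [h3', h3]) (Set.toFinite _)
        have : v ∈ {x ∈ tr | ∃ f ∈ S, x ∈ f} := by rw [hcov]; exact hvtr
        exact hvnc this.2
    have hPmatch : IsPerfectMatchingSet G P := by
      refine ⟨?_, ?_, ?_⟩
      · intro e he
        rcases he with heS | heE
        · exact hunion ▸ Or.inl (hSM heS)
        · exact hunion ▸ Or.inr (hE2pack heE)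
      · intro e he f hf hef x hxe hxf
        rcases he with heS | heE <;> rcases hf with hfS | hfE
        · exact hM.2.1 e (hSM heS) f (hSM hfS) hef x hxe hxf
        · obtain ⟨tr, htr, u, v, hu, hv, huv, hunc, hvnc, rfl⟩ := hfE
          rcases Sym2.mem_iff.mp hxf with rfl | rfl
          · exact hunc ⟨e, heS, hxe⟩
          · exact hvnc ⟨e, heS, hxe⟩
        · obtain ⟨tr, htr, u, v, hu, hv, huv, hunc, hvnc, rfl⟩ := heE
          rcases Sym2.mem_iff.mp hxe with rfl | rfl
          · exact hunc ⟨f, hfS, hxf⟩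
          · exact hvnc ⟨f, hfS, hxf⟩
        · obtain ⟨tr, htr, u, v, hu, hv, huv, hunc, hvnc, rfl⟩ := heE
          obtain ⟨tr', htr', u', v', hu', hv', huv', hunc', hvnc', rfl⟩ := hfE
          -- x is in both edges, so both triangles contain x
          have hxtr : x ∈ tr := by
            rcases Sym2.mem_iff.mp hxe with rfl | rfl
            · exact hu
            · exact hv
          have hxtr' : x ∈ tr' := by
            rcases Sym2.mem_iff.mp hxf with rfl | rfl
            · exact hu'
            · exact hv'
          have htt : tr = tr' := tri_unique hT htr htr' hxtr hxtr'
          subst htt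
          obtain ⟨a, b, hab, hpair⟩ := key2 tr htr u hu hunc
          have hmem : ∀ y : V, y ∈ tr → (¬ ∃ f ∈ S, y ∈ f) → y ∈ ({a, b} : Set V) := by
            intro y hytr hync
            rw [← hpair]
            exact ⟨hytr, fun hc => hync hc.2⟩
          have he1 : s(u, v) = s(a, b) :=
            pair_eq huv (hmem u hu hunc) (hmem v hv hvnc)
          have he2 : s(u', v') = s(a, b) :=
            pair_eq huv' (hmem u' hu' hunc') (hmem v' hv' hvnc')
          exact hef (he1.trans he2.symm)
      · intro v
        obtain ⟨tr, htr, hvtr⟩ := hT.2.2 v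
        by_cases hvc : ∃ f ∈ S, v ∈ f
        · obtain ⟨f, hfS, hvf⟩ := hvc
          exact ⟨f, Or.inl hfS, hvf⟩
        · obtain ⟨a, b, hab, hpair⟩ := key2 tr htr v hvtr hvc
          have hvab : v ∈ ({a, b} : Set V) := by
            rw [← hpair]; exact ⟨hvtr, fun hc => hvc hc.2⟩
          have hasub : ({a, b} : Set V) ⊆ tr \ {x ∈ tr | ∃ f ∈ S, x ∈ f} := by
            rw [hpair]
          have haprop : ∀ y : V, y ∈ ({a, b} : Set V) → y ∈ tr ∧ ¬ ∃ f ∈ S, y ∈ f := by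
            intro y hy
            have := hasub hy
            exact ⟨this.1, fun ⟨f, hfS, hyf⟩ => this.2 ⟨this.1, f, hfS, hyf⟩⟩
          simp only [Set.mem_insert_iff, Set.mem_singleton_iff] at hvab
          rcases hvab with rfl | rfl
          · refine ⟨s(v, b), Or.inr ⟨tr, htr, v, b, hvtr, (haprop b (by simp)).1,
              hab, hvc, (haprop b (by simp)).2, rfl⟩, Sym2.mem_mk_left v b⟩
          · refine ⟨s(v, a), Or.inr ⟨tr, htr, v, a, hvtr, (haprop a (by simp)).1,
              hab.symm, hvc, (haprop a (by simp)).2, rfl⟩, Sym2.mem_mk_left v a⟩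
    exact ⟨P, ⟨hPmatch, by rw [hPM]; exact hSt⟩, hPM⟩
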